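/- Under the setup of the alternating minimization for F(X1, C, B, D) = ‖(A1 − X1) ⊙ W1‖_F² + ‖A2 − X1C − BD‖_F² (sequences (X1)_p, C_p, B_p, D_p satisfying the first-order stationarity equations, m_p = F((X1)_p, C_p, B_p, D_p)), if Σ_{p=1}^∞ √(m_p − m_{p+1}) < ∞, then the limits lim_{p→∞} B_pD_p and lim_{p→∞} (X1)_p exist; moreover, writing L* = lim_{p→∞} B_pD_p, one also has lim_{p→∞} B_{p+1}D_p = L*. -/

import Mathlib

open Matrix Filter Topology

noncomputable def frob {α β : Type*} [Fintype α] [Fintype β] (M : Matrix α β ℝ) : ℝ :=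
  Real.sqrt (∑ i, ∑ j, (M i j) ^ 2)

noncomputable def projCol {m k : ℕ} (B : Matrix (Fin m) (Fin k) ℝ) :
    Matrix (Fin m) (Fin m) ℝ :=
  B * (Bᵀ * B)⁻¹ * Bᵀ

/-!
The stationarity equations say that each block update leaves a residual orthogonal (in the
Frobenius inner product `⟪E, Δ⟫ = tr (Eᵀ Δ)`) to the change it made, so by Pythagoras
`m_p - m_{p+1}` is the sum of the squared Frobenius norms of the five increments. Each increment
is therefore at most `√(m_p - m_{p+1})`, which is summable: `(X1)_p` and `B_p D_p` are Cauchy,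
and `B_{p+1} D_p - B_{p+1} D_{p+1} = B_{p+1} (D_p - D_{p+1})` tends to zero.
-/

section Frobenius

variable {α β γ : Type*} [Fintype α] [Fintype β] [Fintype γ]

theorem frob_nonneg (M : Matrix α β ℝ) : 0 ≤ frob M := Real.sqrt_nonneg _

theorem frob_sq (M : Matrix α β ℝ) : frob M ^ 2 = (Mᵀ * M).trace := by
  rw [frob, Real.sq_sqrt (by positivity), trace, Finset.sum_comm]
  simp only [diag_apply, mul_apply, transpose_apply, sq]

theorem frob_sub_sq (E Δ : Matrix α β ℝ) :
    frob (E - Δ) ^ 2 = frob E ^ 2 - 2 * (Eᵀ * Δ).trace + frob Δ ^ 2 := by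
  have hsymm : (Δᵀ * E).trace = (Eᵀ * Δ).trace := by
    rw [← trace_transpose, transpose_mul, transpose_transpose]
  simp only [frob_sq, transpose_sub, Matrix.sub_mul, Matrix.mul_sub, trace_sub]
  linarith

theorem frob_sub_sq_of_trace_eq_zero {E Δ : Matrix α β ℝ} (h : (Eᵀ * Δ).trace = 0) :
    frob (E - Δ) ^ 2 = frob E ^ 2 + frob Δ ^ 2 := by
  rw [frob_sub_sq, h]; ring

theorem trace_transpose_mul_mul_left (E : Matrix α β ℝ) (X : Matrix α γ ℝ) (Δ : Matrix γ β ℝ) :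
    (Eᵀ * (X * Δ)).trace = ((Xᵀ * E)ᵀ * Δ).trace := by
  rw [transpose_mul, transpose_transpose, Matrix.mul_assoc]

theorem trace_transpose_mul_mul_right (E : Matrix α β ℝ) (Δ : Matrix α γ ℝ) (C : Matrix γ β ℝ) :
    (Eᵀ * (Δ * C)).trace = ((E * Cᵀ)ᵀ * Δ).trace := by
  rw [transpose_mul, transpose_transpose, ← Matrix.mul_assoc, trace_mul_comm, Matrix.mul_assoc]

theorem trace_transpose_hadamard_mul_hadamard (P Q W : Matrix α β ℝ) :
    ((P ⊙ W)ᵀ * (Q ⊙ W)).trace = ((P ⊙ W ⊙ W)ᵀ * Q).trace := by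
  simp only [trace, diag_apply, mul_apply, transpose_apply, hadamard_apply]
  exact Finset.sum_congr rfl fun _ _ => Finset.sum_congr rfl fun _ _ => by ring

theorem frob_sub_mul_sq_of_transpose_mul_eq_zero {R : Matrix α β ℝ} {X : Matrix α γ ℝ}
    (h : Xᵀ * R = 0) (Δ : Matrix γ β ℝ) :
    frob (R - X * Δ) ^ 2 = frob R ^ 2 + frob (X * Δ) ^ 2 :=
  frob_sub_sq_of_trace_eq_zero (by rw [trace_transpose_mul_mul_left, h]; simp)

theorem frob_sub_mul_sq_of_mul_transpose_eq_zero {R : Matrix α β ℝ} {D : Matrix γ β ℝ}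
    (h : R * Dᵀ = 0) (Δ : Matrix α γ ℝ) :
    frob (R - Δ * D) ^ 2 = frob R ^ 2 + frob (Δ * D) ^ 2 :=
  frob_sub_sq_of_trace_eq_zero (by rw [trace_transpose_mul_mul_right, h]; simp)

theorem frob_hadamard_le (A B : Matrix α β ℝ) : frob (A ⊙ B) ≤ frob A * frob B := by
  have hentry : ∀ i j, B i j ^ 2 ≤ ∑ i, ∑ j, B i j ^ 2 := fun i j =>
    (Finset.single_le_sum (f := fun j => B i j ^ 2) (fun _ _ => sq_nonneg _)
      (Finset.mem_univ j)).trans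
    (Finset.single_le_sum (f := fun i => ∑ j, B i j ^ 2)
      (fun _ _ => Finset.sum_nonneg fun _ _ => sq_nonneg _) (Finset.mem_univ i))
  rw [frob, frob, frob, ← Real.sqrt_mul (by positivity)]
  refine Real.sqrt_le_sqrt ?_
  simp only [hadamard_apply, mul_pow, Finset.sum_mul]
  exact Finset.sum_le_sum fun i _ => Finset.sum_le_sum fun j _ =>
    mul_le_mul_of_nonneg_left (hentry i j) (sq_nonneg _)

theorem frob_le_mul_frob_hadamard {W : Matrix α β ℝ} (hW : ∀ i j, W i j ≠ 0) (M : Matrix α β ℝ) :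
    frob M ≤ frob (W.map (·⁻¹)) * frob (M ⊙ W) := by
  have hM : M = W.map (·⁻¹) ⊙ (M ⊙ W) := by
    ext i j
    simp only [hadamard_apply, map_apply]
    field_simp [hW i j]
  calc frob M = frob (W.map (·⁻¹) ⊙ (M ⊙ W)) := congrArg frob hM
    _ ≤ _ := frob_hadamard_le _ _

section Norm

open scoped Matrix.Norms.Frobenius

theorem frob_eq_norm (M : Matrix α β ℝ) : frob M = ‖M‖ := by
  rw [frobenius_norm_def, frob, Real.sqrt_eq_rpow]
  simp [Real.norm_eq_abs, sq_abs]

theorem frob_add_le (M N : Matrix α β ℝ) : frob (M + N) ≤ frob M + frob N := by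
  simpa only [frob_eq_norm] using norm_add_le M N

theorem exists_tendsto_of_frob_sub_succ_le {f : ℕ → Matrix α β ℝ} {g : ℕ → ℝ}
    (hg : Summable g) (c : ℝ) (h : ∀ p, frob (f p - f (p + 1)) ≤ c * g p) :
    ∃ L, Tendsto f atTop (𝓝 L) :=
  cauchySeq_tendsto_of_complete <| cauchySeq_of_summable_dist <|
    (hg.mul_left c).of_nonneg_of_le (fun _ => dist_nonneg) fun p => by
      rw [dist_eq_norm, ← frob_eq_norm]
      exact h p

theorem Filter.Tendsto.of_frob_sub_le {ι : Type*} {l : Filter ι} {f f' : ι → Matrix α β ℝ}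
    {L : Matrix α β ℝ} {g : ι → ℝ} (hf : Tendsto f l (𝓝 L)) (hg : Tendsto g l (𝓝 0))
    (h : ∀ p, frob (f' p - f p) ≤ g p) : Tendsto f' l (𝓝 L) :=
  tendsto_of_tendsto_of_dist hf <| squeeze_zero (fun _ => dist_nonneg) (fun p => by
    rw [dist_comm, dist_eq_norm, ← frob_eq_norm]
    exact h p) hg

end Norm

end Frobenius

section Objective

variable {m k l s : Type*} [Fintype m] [Fintype k] [Fintype l] [Fintype s]
  (A1 W1 : Matrix m k ℝ) (A2 : Matrix m l ℝ)

-- The paper's `F(X1, C, B, D)`.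
noncomputable def objective (X : Matrix m k ℝ) (C : Matrix k l ℝ) (B : Matrix m s ℝ)
    (D : Matrix s l ℝ) : ℝ :=
  frob ((A1 - X) ⊙ W1) ^ 2 + frob (A2 - X * C - B * D) ^ 2

variable {A1 W1 A2}

theorem objective_eq_of_hadamard_stationary {X X' : Matrix m k ℝ} {C : Matrix k l ℝ}
    {B : Matrix m s ℝ} {D : Matrix s l ℝ}
    (h : (X' - A1) ⊙ W1 ⊙ W1 = (A2 - X' * C - B * D) * Cᵀ) :
    objective A1 W1 A2 X C B D = objective A1 W1 A2 X' C B D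
      + frob ((X - X') ⊙ W1) ^ 2 + frob ((X - X') * C) ^ 2 := by
  have hH : (A1 - X) ⊙ W1 = (A1 - X') ⊙ W1 - (X - X') ⊙ W1 := by
    ext i j; simp only [Matrix.sub_apply, hadamard_apply]; ring
  have hR : A2 - X * C - B * D = (A2 - X' * C - B * D) - (X - X') * C := by
    rw [Matrix.sub_mul]; abel
  have hcross : (((A1 - X') ⊙ W1)ᵀ * ((X - X') ⊙ W1)).trace
      + ((A2 - X' * C - B * D)ᵀ * ((X - X') * C)).trace = 0 := by
    rw [trace_transpose_hadamard_mul_hadamard, trace_transpose_mul_mul_right, ← h, ← trace_add,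
      ← Matrix.add_mul, ← transpose_add, ← add_hadamard, ← add_hadamard, sub_add_sub_cancel,
      sub_self, zero_hadamard, zero_hadamard, transpose_zero, Matrix.zero_mul, trace_zero]
  unfold objective
  rw [hH, hR, frob_sub_sq, frob_sub_sq]
  linarith

theorem objective_sub_objective_eq_of_stationary {X X' : Matrix m k ℝ} {C C' : Matrix k l ℝ}
    {B B' : Matrix m s ℝ} {D D' : Matrix s l ℝ}
    (h1 : (X' - A1) ⊙ W1 ⊙ W1 = (A2 - X' * C - B * D) * Cᵀ)
    (h2 : X'ᵀ * (A2 - X' * C' - B * D) = 0)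
    (h3 : (A2 - X' * C' - B' * D) * Dᵀ = 0)
    (h4 : B'ᵀ * (A2 - X' * C' - B' * D') = 0) :
    objective A1 W1 A2 X C B D - objective A1 W1 A2 X' C' B' D'
      = frob ((X - X') ⊙ W1) ^ 2 + frob ((X - X') * C) ^ 2 + frob (X' * (C - C')) ^ 2
        + frob ((B - B') * D) ^ 2 + frob (B' * (D - D')) ^ 2 := by
  have hC : A2 - X' * C - B * D = (A2 - X' * C' - B * D) - X' * (C - C') := by
    rw [Matrix.mul_sub]; abel
  have hB : A2 - X' * C' - B * D = (A2 - X' * C' - B' * D) - (B - B') * D := by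
    rw [Matrix.sub_mul]; abel
  have hD : A2 - X' * C' - B' * D = (A2 - X' * C' - B' * D') - B' * (D - D') := by
    rw [Matrix.mul_sub]; abel
  have hX := objective_eq_of_hadamard_stationary (X := X) h1
  unfold objective at *
  rw [hC, frob_sub_mul_sq_of_transpose_mul_eq_zero h2, hB,
    frob_sub_mul_sq_of_mul_transpose_eq_zero h3, hD,
    frob_sub_mul_sq_of_transpose_mul_eq_zero h4] at hX
  linarith

end Objective

/-- **Theorem 4.3 (ii).** If `Σ √(m_p − m_{p+1}) < ∞`, then `lim B_pD_p` and `lim (X1)_p`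
exist, and moreover `lim B_{p+1}D_p = L* := lim B_pD_p`. -/
theorem stmt_16
    {m k l s : ℕ}
    (A1 : Matrix (Fin m) (Fin k) ℝ) (A2 : Matrix (Fin m) (Fin l) ℝ)
    (W1 : Matrix (Fin m) (Fin k) ℝ) (hW1 : ∀ i j, 0 < W1 i j)
    (X1 : ℕ → Matrix (Fin m) (Fin k) ℝ) (C : ℕ → Matrix (Fin k) (Fin l) ℝ)
    (B : ℕ → Matrix (Fin m) (Fin s) ℝ) (D : ℕ → Matrix (Fin s) (Fin l) ℝ)
    (mseq : ℕ → ℝ)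
    (hm : ∀ p, mseq p = frob (Matrix.hadamard (A1 - X1 p) W1) ^ 2 +
      frob (A2 - X1 p * C p - B p * D p) ^ 2)
    (heq1 : ∀ p, Matrix.hadamard (Matrix.hadamard (X1 (p + 1) - A1) W1) W1 =
      (A2 - X1 (p + 1) * C p - B p * D p) * (C p)ᵀ)
    (heq2 : ∀ p, (X1 (p + 1))ᵀ * (A2 - X1 (p + 1) * C (p + 1) - B p * D p) = 0)
    (heq3 : ∀ p, (A2 - X1 (p + 1) * C (p + 1) - B (p + 1) * D p) * (D p)ᵀ = 0)
    (heq4 : ∀ p, (B (p + 1))ᵀ * (A2 - X1 (p + 1) * C (p + 1) - B (p + 1) * D (p + 1)) = 0)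
    (hsum : Summable (fun p => Real.sqrt (mseq p - mseq (p + 1))))
    :
    (∃ X1s : Matrix (Fin m) (Fin k) ℝ, Tendsto X1 atTop (nhds X1s)) ∧
    ∃ Ls : Matrix (Fin m) (Fin l) ℝ,
      Tendsto (fun p => B p * D p) atTop (nhds Ls) ∧
      Tendsto (fun p => B (p + 1) * D p) atTop (nhds Ls) := by
  have hdesc : ∀ p, mseq p - mseq (p + 1)
      = frob ((X1 p - X1 (p + 1)) ⊙ W1) ^ 2 + frob ((X1 p - X1 (p + 1)) * C p) ^ 2
        + frob (X1 (p + 1) * (C p - C (p + 1))) ^ 2 + frob ((B p - B (p + 1)) * D p) ^ 2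
        + frob (B (p + 1) * (D p - D (p + 1))) ^ 2 := fun p => by
    rw [hm, hm]
    exact objective_sub_objective_eq_of_stationary (heq1 p) (heq2 p) (heq3 p) (heq4 p)
  set g := fun p => √(mseq p - mseq (p + 1))
  have hX : ∀ p, frob ((X1 p - X1 (p + 1)) ⊙ W1) ≤ g p := fun p =>
    Real.le_sqrt_of_sq_le (sub_nonneg.1 (by rw [hdesc p]; ring_nf; positivity))
  have hB : ∀ p, frob ((B p - B (p + 1)) * D p) ≤ g p := fun p =>
    Real.le_sqrt_of_sq_le (sub_nonneg.1 (by rw [hdesc p]; ring_nf; positivity))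
  have hD : ∀ p, frob (B (p + 1) * (D p - D (p + 1))) ≤ g p := fun p =>
    Real.le_sqrt_of_sq_le (sub_nonneg.1 (by rw [hdesc p]; ring_nf; positivity))
  refine ⟨exists_tendsto_of_frob_sub_succ_le hsum _ fun p =>
    (frob_le_mul_frob_hadamard (fun i j => (hW1 i j).ne') _).trans
      (mul_le_mul_of_nonneg_left (hX p) (frob_nonneg _)), ?_⟩
  obtain ⟨L, hL⟩ := exists_tendsto_of_frob_sub_succ_le hsum 2 fun p => by
    rw [show B p * D p - B (p + 1) * D (p + 1)
        = (B p - B (p + 1)) * D p + B (p + 1) * (D p - D (p + 1)) by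
      rw [Matrix.sub_mul, Matrix.mul_sub]; abel]
    linarith [frob_add_le ((B p - B (p + 1)) * D p) (B (p + 1) * (D p - D (p + 1))), hB p, hD p]
  refine ⟨L, hL, (hL.comp (tendsto_add_atTop_nat 1)).of_frob_sub_le hsum.tendsto_atTop_zero
    fun p => ?_⟩
  rw [Function.comp_apply, ← Matrix.mul_sub]
  exact hD p
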